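/- Let G be a cubic graph with m edges and n vertices and let k ∈ {0,1}. If G has a cycle cover ℱ of length (4/3)m + k, then the set C of edges of weight 1 with respect to ℱ has exactly n − k edges and induces a subgraph in which every vertex has degree 0 or 2 (a disjoint union of cycles), and adding the cycles of C to the family ℱ yields a cycle double cover of G. -/

import Mathlib

/-!
Write `w e` for the weight of an edge in `ℱ` and `s v` for the sum of the weights of the three
edges at `v`. Every cycle uses 0 or 2 edges at `v`, so `s v` is even, and `s v ≥ 3` because `ℱ`
covers `G`; hence `s v ≥ 4`. Double counting gives `∑ v, s v = 2 · length ℱ = 4n + 2k`, so the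
even excesses `s v - 4` sum to `2k ≤ 2`. An edge of weight at least 3 would give both of its ends
excess at least 2, so every weight is 1 or 2, and then `v` lies on exactly `6 - s v ∈ {0, 2}` edges
of weight 1; summing over `v` gives `2 |C| = 2n - 2k`. The weight-1 edges therefore form a graph
with all degrees 0 or 2, whose nontrivial components are vertex-disjoint cycles; adding them to
`ℱ` raises the weight-1 edges to weight 2 and leaves the others at 2.
-/

open scoped Classical

namespace ShortCycleCovers

variable {V : Type*}

/-- A cycle in `G`: a connected 2-regular subgraph. -/
def IsCycleSub {G : SimpleGraph V} (C : G.Subgraph) : Prop :=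
  C.Connected ∧ ∀ v ∈ C.verts, (C.neighborSet v).ncard = 2

/-- A cycle cover of `G`: a family of cycles covering every edge at least once. -/
def IsCycleCover (G : SimpleGraph V) (𝒞 : Multiset G.Subgraph) : Prop :=
  (∀ C ∈ 𝒞, IsCycleSub C) ∧ ∀ e ∈ G.edgeSet, ∃ C ∈ 𝒞, e ∈ C.edgeSet

/-- The length of a family of cycles: the sum of the numbers of edges of its members. -/
noncomputable def coverLength {G : SimpleGraph V} (𝒞 : Multiset G.Subgraph) : ℕ :=
  (𝒞.map fun C => C.edgeSet.ncard).sum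

/-- The weight of an edge w.r.t. a family of cycles: the number of members containing it. -/
noncomputable def edgeWeight {G : SimpleGraph V} (𝒞 : Multiset G.Subgraph) (e : Sym2 V) : ℕ :=
  (𝒞.map fun C => if e ∈ C.edgeSet then 1 else 0).sum

/-- A cycle double cover: a family of cycles covering every edge exactly twice. -/
def IsCDC (G : SimpleGraph V) (𝒞 : Multiset G.Subgraph) : Prop :=
  (∀ C ∈ 𝒞, IsCycleSub C) ∧ ∀ e ∈ G.edgeSet, edgeWeight 𝒞 e = 2

/-- The length of a shortest cycle cover of `G`. -/
noncomputable def scc (G : SimpleGraph V) : ℕ :=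
  sInf {L : ℕ | ∃ 𝒞 : Multiset G.Subgraph, IsCycleCover G 𝒞 ∧ coverLength 𝒞 = L}

/-- A cubic graph: every vertex has degree 3. -/
def IsCubic (G : SimpleGraph V) : Prop := ∀ v : V, (G.neighborSet v).ncard = 3

/-- A bridgeless graph: no cut edge. -/
def Bridgeless (G : SimpleGraph V) : Prop := ∀ e ∈ G.edgeSet, ¬ G.IsBridge e

open Finset SimpleGraph

section Graph

variable {G : SimpleGraph V}

lemma ncard_neighborSet_eq_ncard_incidenceSet (H : SimpleGraph V) (v : V) :
    (H.neighborSet v).ncard = (H.incidenceSet v).ncard := by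
  rw [← Nat.card_coe_set_eq, ← Nat.card_coe_set_eq,
    Nat.card_congr (H.incidenceSetEquivNeighborSet v)]

lemma edgeSet_fromEdgeSet_of_subset {s : Set (Sym2 V)} (hs : s ⊆ G.edgeSet) :
    (fromEdgeSet s).edgeSet = s := by
  rw [edgeSet_fromEdgeSet, sdiff_eq_left]
  exact Set.disjoint_left.mpr fun e he => G.not_isDiag_of_mem_edgeSet (hs he)

variable [Fintype V]

lemma sum_sum_incidenceFinset {M : Type*} [AddCommMonoid M] (f : Sym2 V → M) :
    ∑ v, ∑ e ∈ G.incidenceFinset v, f e = 2 • ∑ e ∈ G.edgeFinset, f e := by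
  simp_rw [G.incidenceFinset_eq_filter, sum_filter]
  rw [sum_comm, smul_sum]
  refine sum_congr rfl fun e he => ?_
  rw [← sum_filter, sum_const]
  congr 1
  induction e with
  | _ a b =>
    have hab : a ≠ b := (mem_edgeFinset.mp he).ne
    rw [show ({v | v ∈ s(a, b)} : Finset V) = {a, b} by ext v; simp, card_pair hab]

lemma card_filter_incidenceFinset_mem_edgeSet (C : G.Subgraph) (v : V) :
    #{e ∈ G.incidenceFinset v | e ∈ C.edgeSet} = (C.neighborSet v).ncard := by
  rw [show C.neighborSet v = C.spanningCoe.neighborSet v from rfl,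
    ncard_neighborSet_eq_ncard_incidenceSet, ← Set.ncard_coe_finset, coe_filter]
  congr 1
  ext e
  simp only [mem_incidenceFinset, incidenceSet, Subgraph.edgeSet_spanningCoe, Set.mem_ofPred_eq]
  exact ⟨fun ⟨⟨_, hv⟩, hC⟩ => ⟨hC, hv⟩, fun ⟨hC, hv⟩ => ⟨⟨C.edgeSet_subset hC, hv⟩, hC⟩⟩

lemma ncard_setOf_mem_edgeSet (p : Sym2 V → Prop) [DecidablePred p] :
    {e ∈ G.edgeSet | p e}.ncard = #{e ∈ G.edgeFinset | p e} := by
  rw [← Set.ncard_coe_finset, coe_filter]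
  simp only [mem_edgeFinset]

lemma ncard_setOf_mem_edgeSet_and_mem (p : Sym2 V → Prop) [DecidablePred p] (v : V) :
    {e ∈ G.edgeSet | p e ∧ v ∈ e}.ncard = #{e ∈ G.incidenceFinset v | p e} := by
  rw [← Set.ncard_coe_finset, coe_filter]
  congr 1
  ext e
  simp only [mem_incidenceFinset, incidenceSet, Set.mem_ofPred_eq]
  tauto

end Graph

lemma sum_add_card_filter_eq_one {ι : Type*} {s : Finset ι} {f : ι → ℕ}
    (h : ∀ i ∈ s, f i = 1 ∨ f i = 2) : ∑ i ∈ s, f i + #{i ∈ s | f i = 1} = 2 * #s := by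
  rw [card_filter, ← sum_add_distrib, mul_comm, ← smul_eq_mul, ← sum_const]
  refine sum_congr rfl fun i hi => ?_
  rcases h i hi with h | h <;> simp [h]

section EdgeWeight

variable {G : SimpleGraph V}

lemma edgeWeight_eq_countP (𝒞 : Multiset G.Subgraph) (e : Sym2 V) :
    edgeWeight 𝒞 e = 𝒞.countP (e ∈ ·.edgeSet) := by
  induction 𝒞 using Multiset.induction_on with
  | empty => rfl
  | cons C 𝒞 ih => by_cases h : e ∈ C.edgeSet <;> simp_all [edgeWeight, add_comm]

lemma edgeWeight_add (𝒞 𝒟 : Multiset G.Subgraph) (e : Sym2 V) :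
    edgeWeight (𝒞 + 𝒟) e = edgeWeight 𝒞 e + edgeWeight 𝒟 e := by
  simp only [edgeWeight_eq_countP, Multiset.countP_add]

lemma edgeWeight_pos_iff {𝒞 : Multiset G.Subgraph} {e : Sym2 V} :
    0 < edgeWeight 𝒞 e ↔ ∃ C ∈ 𝒞, e ∈ C.edgeSet := by
  rw [edgeWeight_eq_countP, Multiset.countP_pos]

lemma IsCycleCover.one_le_edgeWeight {𝒞 : Multiset G.Subgraph} (h : IsCycleCover G 𝒞)
    {e : Sym2 V} (he : e ∈ G.edgeSet) : 1 ≤ edgeWeight 𝒞 e :=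
  edgeWeight_pos_iff.mpr (h.2 e he)

variable [Fintype V]

lemma IsCycleCover.card_le_sum_edgeWeight {𝒞 : Multiset G.Subgraph} (h : IsCycleCover G 𝒞)
    {s : Finset (Sym2 V)} (hs : s ⊆ G.edgeFinset) : #s ≤ ∑ e ∈ s, edgeWeight 𝒞 e := by
  simpa using card_nsmul_le_sum s (edgeWeight 𝒞) 1 fun e he =>
    h.one_le_edgeWeight (mem_edgeFinset.mp (hs he))

lemma sum_edgeWeight_eq_coverLength (𝒞 : Multiset G.Subgraph) :
    ∑ e ∈ G.edgeFinset, edgeWeight 𝒞 e = coverLength 𝒞 := by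
  simp only [edgeWeight, coverLength, ← Multiset.sum_map_sum]
  congr 1
  refine Multiset.map_congr rfl fun C _ => ?_
  rw [← card_filter, ← Set.ncard_coe_finset, coe_filter]
  congr 1
  ext e
  rw [Set.mem_ofPred_eq, mem_edgeFinset]
  exact ⟨fun h => h.2, fun h => ⟨C.edgeSet_subset h, h⟩⟩

end EdgeWeight

section VertexWeight

variable [Fintype V] {G : SimpleGraph V}

noncomputable def vertexWeight (𝒞 : Multiset G.Subgraph) (v : V) : ℕ :=
  ∑ e ∈ G.incidenceFinset v, edgeWeight 𝒞 e

lemma vertexWeight_eq_sum_ncard_neighborSet (𝒞 : Multiset G.Subgraph) (v : V) :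
    vertexWeight 𝒞 v = (𝒞.map fun C => (C.neighborSet v).ncard).sum := by
  simp only [vertexWeight, edgeWeight, ← Multiset.sum_map_sum]
  congr 1
  refine Multiset.map_congr rfl fun C _ => ?_
  rw [← card_filter_incidenceFinset_mem_edgeSet, card_filter]

lemma IsCycleSub.ncard_neighborSet {C : G.Subgraph} (hC : IsCycleSub C) (v : V) :
    (C.neighborSet v).ncard = 0 ∨ (C.neighborSet v).ncard = 2 := by
  by_cases hv : v ∈ C.verts
  · exact .inr (hC.2 v hv)
  · refine .inl ((Set.ncard_eq_zero).mpr (Set.eq_empty_of_forall_notMem fun w hw => ?_))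
    exact hv (C.edge_vert hw)

lemma even_vertexWeight {𝒞 : Multiset G.Subgraph} (h𝒞 : ∀ C ∈ 𝒞, IsCycleSub C) (v : V) :
    Even (vertexWeight 𝒞 v) := by
  rw [vertexWeight_eq_sum_ncard_neighborSet]
  refine Multiset.sum_induction Even _ (fun _ _ => Even.add) .zero fun n hn => ?_
  obtain ⟨C, hC, rfl⟩ := Multiset.mem_map.mp hn
  rcases (h𝒞 C hC).ncard_neighborSet v with h | h <;> rw [h] <;> decide

lemma sum_vertexWeight (𝒞 : Multiset G.Subgraph) :
    ∑ v, vertexWeight 𝒞 v = 2 * coverLength 𝒞 := by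
  simp only [vertexWeight]
  rw [sum_sum_incidenceFinset, smul_eq_mul, sum_edgeWeight_eq_coverLength]

end VertexWeight

section Cubic

variable [Fintype V] {G : SimpleGraph V}

lemma IsCubic.card_incidenceFinset (hG : IsCubic G) (v : V) : #(G.incidenceFinset v) = 3 := by
  rw [card_incidenceFinset_eq_degree, ← card_neighborSet_eq_degree, ← Nat.card_eq_fintype_card,
    Nat.card_coe_set_eq, hG v]

lemma IsCubic.two_mul_ncard_edgeSet (hG : IsCubic G) :
    2 * G.edgeSet.ncard = 3 * Fintype.card V := by
  rw [← coe_edgeFinset, Set.ncard_coe_finset, ← sum_degrees_eq_twice_card_edges]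
  simp [← card_incidenceFinset_eq_degree, hG.card_incidenceFinset, mul_comm]

end Cubic

section ShortCover

variable [Fintype V] {G : SimpleGraph V} {ℱ : Multiset G.Subgraph}

lemma four_le_vertexWeight (hG : IsCubic G) (hℱ : IsCycleCover G ℱ) (v : V) :
    4 ≤ vertexWeight ℱ v := by
  have h3 : 3 ≤ vertexWeight ℱ v :=
    hG.card_incidenceFinset v ▸ hℱ.card_le_sum_edgeWeight (G.incidenceFinset_subset v)
  obtain ⟨t, ht⟩ := even_vertexWeight hℱ.1 v
  omega

lemma edgeWeight_add_two_le_vertexWeight (hG : IsCubic G) (hℱ : IsCycleCover G ℱ) {v : V}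
    {e : Sym2 V} (he : e ∈ G.incidenceFinset v) : edgeWeight ℱ e + 2 ≤ vertexWeight ℱ v := by
  have hrest : #((G.incidenceFinset v).erase e) = 2 := by
    rw [card_erase_of_mem he, hG.card_incidenceFinset]
  have := hℱ.card_le_sum_edgeWeight ((erase_subset e _).trans (G.incidenceFinset_subset v))
  rw [vertexWeight, ← add_sum_erase _ _ he]
  omega

lemma sum_vertexWeight_sub_four (hG : IsCubic G) (hℱ : IsCycleCover G ℱ) {k : ℕ}
    (hlen : 3 * coverLength ℱ = 4 * G.edgeSet.ncard + 3 * k) :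
    ∑ v, (vertexWeight ℱ v - 4) = 2 * k := by
  have hsplit : ∑ v, vertexWeight ℱ v = ∑ v, (vertexWeight ℱ v - 4) + 4 * Fintype.card V := by
    rw [mul_comm, ← smul_eq_mul, ← card_univ, ← sum_const, ← sum_add_distrib]
    exact sum_congr rfl fun v _ => (Nat.sub_add_cancel (four_le_vertexWeight hG hℱ v)).symm
  have := hG.two_mul_ncard_edgeSet
  rw [sum_vertexWeight] at hsplit
  omega

lemma edgeWeight_le_two (hG : IsCubic G) (hℱ : IsCycleCover G ℱ) {k : ℕ} (hk : k ≤ 1)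
    (hlen : 3 * coverLength ℱ = 4 * G.edgeSet.ncard + 3 * k) {e : Sym2 V}
    (he : e ∈ G.edgeSet) : edgeWeight ℱ e ≤ 2 := by
  by_contra! h
  induction e with
  | _ a b =>
    have six_le : ∀ v ∈ s(a, b), 6 ≤ vertexWeight ℱ v := fun v hv => by
      have := edgeWeight_add_two_le_vertexWeight hG hℱ
        ((G.mem_incidenceFinset v _).mpr ⟨he, hv⟩)
      obtain ⟨t, ht⟩ := even_vertexWeight hℱ.1 v
      omega
    have hab : a ≠ b := (G.mem_edgeSet.mp he).ne
    have := sum_le_sum_of_subset (f := fun v => vertexWeight ℱ v - 4) (subset_univ {a, b})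
    rw [sum_pair hab, sum_vertexWeight_sub_four hG hℱ hlen] at this
    have := six_le a (Sym2.mem_mk_left a b)
    have := six_le b (Sym2.mem_mk_right a b)
    omega

lemma card_incidence_edgeWeight_eq_one_add_vertexWeight_sub_four (hG : IsCubic G)
    (hℱ : IsCycleCover G ℱ) {k : ℕ} (hk : k ≤ 1)
    (hlen : 3 * coverLength ℱ = 4 * G.edgeSet.ncard + 3 * k) (v : V) :
    #{e ∈ G.incidenceFinset v | edgeWeight ℱ e = 1} + (vertexWeight ℱ v - 4) = 2 := by
  have h := sum_add_card_filter_eq_one fun e he =>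
    have he' : e ∈ G.edgeSet := G.incidenceSet_subset v ((G.mem_incidenceFinset v e).mp he)
    have := hℱ.one_le_edgeWeight he'
    have := edgeWeight_le_two hG hℱ hk hlen he'
    show edgeWeight ℱ e = 1 ∨ edgeWeight ℱ e = 2 by omega
  change vertexWeight ℱ v + _ = _ at h
  have := four_le_vertexWeight hG hℱ v
  rw [hG.card_incidenceFinset] at h
  omega

lemma card_incidence_edgeWeight_eq_one_eq_zero_or_two (hG : IsCubic G)
    (hℱ : IsCycleCover G ℱ) {k : ℕ} (hk : k ≤ 1)
    (hlen : 3 * coverLength ℱ = 4 * G.edgeSet.ncard + 3 * k) (v : V) :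
    #{e ∈ G.incidenceFinset v | edgeWeight ℱ e = 1} = 0 ∨
      #{e ∈ G.incidenceFinset v | edgeWeight ℱ e = 1} = 2 := by
  have := card_incidence_edgeWeight_eq_one_add_vertexWeight_sub_four hG hℱ hk hlen v
  have := four_le_vertexWeight hG hℱ v
  obtain ⟨t, ht⟩ := even_vertexWeight hℱ.1 v
  omega

lemma card_edgeWeight_eq_one (hG : IsCubic G) (hℱ : IsCycleCover G ℱ) {k : ℕ}
    (hk : k ≤ 1) (hlen : 3 * coverLength ℱ = 4 * G.edgeSet.ncard + 3 * k) :
    #{e ∈ G.edgeFinset | edgeWeight ℱ e = 1} = Fintype.card V - k := by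
  have hcount := sum_sum_incidenceFinset (G := G) fun e => if edgeWeight ℱ e = 1 then 1 else 0
  simp only [← card_filter, smul_eq_mul] at hcount
  have hsum := sum_congr rfl fun v (_ : v ∈ univ) =>
    card_incidence_edgeWeight_eq_one_add_vertexWeight_sub_four hG hℱ hk hlen v
  rw [sum_add_distrib, sum_vertexWeight_sub_four hG hℱ hlen, hcount, sum_const, card_univ,
    smul_eq_mul] at hsum
  omega

end ShortCover

section ComponentSubgraph

variable {G H : SimpleGraph V} (hle : H ≤ G)

noncomputable def componentSubgraph (c : H.ConnectedComponent) : G.Subgraph :=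
  (toSubgraph H hle).induce c.supp

variable {hle}

lemma componentSubgraph_adj {c : H.ConnectedComponent} {u v : V} :
    (componentSubgraph hle c).Adj u v ↔ H.Adj u v ∧ u ∈ c.supp :=
  ⟨fun ⟨hu, _, h⟩ => ⟨h, hu⟩, fun ⟨h, hu⟩ => ⟨hu, c.mem_supp_of_adj_mem_supp hu h, h⟩⟩

lemma componentSubgraph_connected (c : H.ConnectedComponent) :
    (componentSubgraph hle c).Connected :=
  ⟨c.connected_toSimpleGraph.mono fun x y h => ⟨x.2, y.2, h⟩⟩

lemma neighborSet_componentSubgraph {c : H.ConnectedComponent} {v : V} (hv : v ∈ c.supp) :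
    (componentSubgraph hle c).neighborSet v = H.neighborSet v :=
  Set.ext fun _ => componentSubgraph_adj.trans (and_iff_left hv)

lemma mem_edgeSet_componentSubgraph {c : H.ConnectedComponent} {a b : V} :
    s(a, b) ∈ (componentSubgraph hle c).edgeSet ↔ H.Adj a b ∧ H.connectedComponentMk a = c :=
  componentSubgraph_adj.trans (and_congr_right' (c.mem_supp_iff a))

lemma isCycleSub_componentSubgraph {c : H.ConnectedComponent}
    (hc : ∀ v ∈ c.supp, (H.neighborSet v).ncard = 2) : IsCycleSub (componentSubgraph hle c) :=
  ⟨componentSubgraph_connected c, fun v hv => (neighborSet_componentSubgraph hv).symm ▸ hc v hv⟩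

end ComponentSubgraph

section DegreeZeroOrTwo

variable [Finite V] {H : SimpleGraph V}

lemma ncard_neighborSet_eq_two_of_adj
    (hdeg : ∀ v, (H.neighborSet v).ncard = 0 ∨ (H.neighborSet v).ncard = 2) {u w : V}
    (h : H.Adj u w) : (H.neighborSet u).ncard = 2 :=
  (hdeg u).resolve_left fun h0 => ((Set.ncard_eq_zero).mp h0).subset h

lemma ncard_neighborSet_eq_two_of_reachable
    (hdeg : ∀ v, (H.neighborSet v).ncard = 0 ∨ (H.neighborSet v).ncard = 2) {u v : V}
    (hu : (H.neighborSet u).ncard = 2) (huv : H.Reachable v u) : (H.neighborSet v).ncard = 2 := by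
  obtain ⟨p⟩ := huv
  cases p with
  | nil => exact hu
  | cons h _ => exact ncard_neighborSet_eq_two_of_adj hdeg h

end DegreeZeroOrTwo

theorem exists_cycle_decomposition [Fintype V] {G H : SimpleGraph V} (hle : H ≤ G)
    (hdeg : ∀ v, (H.neighborSet v).ncard = 0 ∨ (H.neighborSet v).ncard = 2) :
    ∃ 𝒟 : Multiset G.Subgraph, (∀ D ∈ 𝒟, IsCycleSub D) ∧
      (∀ D₁ ∈ 𝒟, ∀ D₂ ∈ 𝒟, D₁ = D₂ ∨ Disjoint D₁.verts D₂.verts) ∧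
      ∀ e, edgeWeight 𝒟 e = if e ∈ H.edgeSet then 1 else 0 := by
  set S : Finset H.ConnectedComponent := {c | ∀ v ∈ c.supp, (H.neighborSet v).ncard = 2}
  refine ⟨S.val.map (componentSubgraph hle), ?_, ?_, ?_⟩
  · simp only [Multiset.mem_map, mem_val, forall_exists_index, and_imp]
    rintro _ c hc rfl
    exact isCycleSub_componentSubgraph (mem_filter.mp hc).2
  · simp only [Multiset.mem_map, mem_val, forall_exists_index, and_imp]
    rintro _ c₁ - rfl _ c₂ - rfl
    obtain rfl | hne := eq_or_ne c₁ c₂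
    · exact .inl rfl
    · exact .inr (pairwise_disjoint_supp_connectedComponent H hne)
  · intro e
    induction e with
    | _ a b =>
      rw [edgeWeight_eq_countP, Multiset.countP_map, ← filter_val, card_val]
      split_ifs with hab <;> rw [mem_edgeSet] at hab
      · refine card_eq_one.mpr ⟨H.connectedComponentMk a,
          eq_singleton_iff_unique_mem.mpr ⟨mem_filter.mpr ⟨?_, ?_⟩, ?_⟩⟩
        · exact mem_filter.mpr ⟨mem_univ _, fun v hv => ncard_neighborSet_eq_two_of_reachable hdeg
            (ncard_neighborSet_eq_two_of_adj hdeg hab) (ConnectedComponent.exact hv)⟩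
        · exact mem_edgeSet_componentSubgraph.mpr ⟨hab, rfl⟩
        · exact fun c hc => (mem_edgeSet_componentSubgraph.mp (mem_filter.mp hc).2).2.symm
      · exact card_eq_zero.mpr <| filter_eq_empty_iff.mpr fun c _ h =>
          hab (mem_edgeSet_componentSubgraph.mp h).1

/-- If a cubic graph has a cycle cover `ℱ` of length `(4/3)m + k`, `k ∈ {0,1}`, then the
set of edges of weight 1 has `n - k` edges, induces a subgraph in which every vertex has
degree 0 or 2, and adding its cycles to `ℱ` yields a cycle double cover of `G`. -/
theorem statement2 [Fintype V] (G : SimpleGraph V) (hcubic : IsCubic G)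
    (k : ℕ) (hk : k = 0 ∨ k = 1)
    (ℱ : Multiset G.Subgraph) (hcover : IsCycleCover G ℱ)
    (hlen : 3 * coverLength ℱ = 4 * G.edgeSet.ncard + 3 * k) :
    ({e ∈ G.edgeSet | edgeWeight ℱ e = 1}).ncard = Fintype.card V - k ∧
    (∀ v : V, ({e ∈ G.edgeSet | edgeWeight ℱ e = 1 ∧ v ∈ e}).ncard = 0 ∨
      ({e ∈ G.edgeSet | edgeWeight ℱ e = 1 ∧ v ∈ e}).ncard = 2) ∧
    ∃ 𝒟 : Multiset G.Subgraph,
      (∀ D ∈ 𝒟, IsCycleSub D) ∧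
      (∀ D₁ ∈ 𝒟, ∀ D₂ ∈ 𝒟, D₁ = D₂ ∨ Disjoint D₁.verts D₂.verts) ∧
      (∀ e : Sym2 V, (e ∈ G.edgeSet ∧ edgeWeight ℱ e = 1) ↔ ∃ D ∈ 𝒟, e ∈ D.edgeSet) ∧
      IsCDC G (ℱ + 𝒟) := by
  have hk1 : k ≤ 1 := by omega
  have hdeg (v : V) : ({e ∈ G.edgeSet | edgeWeight ℱ e = 1 ∧ v ∈ e}).ncard = 0 ∨
      ({e ∈ G.edgeSet | edgeWeight ℱ e = 1 ∧ v ∈ e}).ncard = 2 := by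
    rw [ncard_setOf_mem_edgeSet_and_mem]
    exact card_incidence_edgeWeight_eq_one_eq_zero_or_two hcubic hcover hk1 hlen v
  set H := fromEdgeSet {e ∈ G.edgeSet | edgeWeight ℱ e = 1}
  have hH : H.edgeSet = {e ∈ G.edgeSet | edgeWeight ℱ e = 1} :=
    edgeSet_fromEdgeSet_of_subset fun _ he => he.1
  have hHdeg (v : V) : (H.neighborSet v).ncard =
      ({e ∈ G.edgeSet | edgeWeight ℱ e = 1 ∧ v ∈ e}).ncard := by
    rw [ncard_neighborSet_eq_ncard_incidenceSet, incidenceSet, hH]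
    simp only [Set.mem_ofPred_eq, and_assoc]
  obtain ⟨𝒟, h𝒟, hdisj, hweight⟩ := exists_cycle_decomposition (G := G)
    (edgeSet_subset_edgeSet.mp (by rw [hH]; exact fun _ he => he.1))
    fun v => hHdeg v ▸ hdeg v
  refine ⟨?_, hdeg, 𝒟, h𝒟, hdisj, fun e => ?_, ⟨?_, fun e he => ?_⟩⟩
  · rw [ncard_setOf_mem_edgeSet]
    exact card_edgeWeight_eq_one hcubic hcover hk1 hlen
  · simp only [← edgeWeight_pos_iff, hweight, hH, Set.mem_ofPred_eq]
    split_ifs <;> simp_all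
  · exact fun C hC => (Multiset.mem_add.mp hC).elim (hcover.1 C) (h𝒟 C)
  · have := hcover.one_le_edgeWeight he
    have := edgeWeight_le_two hcubic hcover hk1 hlen he
    rw [edgeWeight_add, hweight]
    split_ifs with h <;> simp only [hH, Set.mem_ofPred_eq, he, true_and] at h <;> omega

end ShortCycleCovers
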